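/- arXiv:0812.1655 — 5 statements merged into one kernel-verified Lean document; each statement's English description precedes it below -/
import Mathlib

section
/- Let f : ℝ² → ℝ be C² with f(x;x) = 0 for all x, and suppose at a point x₀, ∂₁f(x₀;x₀) > C/2 for some C > 0, and all second-order partial derivatives of f are bounded by C′ on a neighborhood. Then for all y with 0 < |y − x₀| < C/(2C′): f(y;x₀) > C(y − x₀)/4 if y > x₀ (so (y−x₀)f(y;x₀) > 0), and f(x₀;y) < C(x₀−y)/4, hence f(y;x₀)·f(x₀;y) < 0. -/
noncomputable def p1 (f : ℝ × ℝ → ℝ) (a b : ℝ) : ℝ := deriv (fun u => f (u, b)) a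
noncomputable def p2 (f : ℝ × ℝ → ℝ) (a b : ℝ) : ℝ := deriv (fun v => f (a, v)) b
noncomputable def p11 (f : ℝ × ℝ → ℝ) (a b : ℝ) : ℝ := deriv (fun u => p1 f u b) a
noncomputable def p12 (f : ℝ × ℝ → ℝ) (a b : ℝ) : ℝ := deriv (fun v => p1 f a v) b
noncomputable def p22 (f : ℝ × ℝ → ℝ) (a b : ℝ) : ℝ := deriv (fun v => p2 f a v) b

/-!
Expanding `f(·; x₀)` and `f(x₀; ·)` to second order about `x₀`, with Lagrange remainder at most
`C′/2 · (y − x₀)²`, and using `∂₂f(x₀; x₀) = −∂₁f(x₀; x₀)` (differentiate `f(x; x) = 0`), gives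
`(y − x₀) f(y; x₀) > C (y − x₀)² / 4` and `(y − x₀) f(x₀; y) < −C (y − x₀)² / 4` as soon as
`C′ |y − x₀| < C / 2`. Every claim is read off from these two inequalities.
-/

lemma taylorWithinEval_one_of_differentiableAt {g : ℝ → ℝ} {s : Set ℝ} {x₀ : ℝ}
    (hg : DifferentiableAt ℝ g x₀) (hs : UniqueDiffWithinAt ℝ s x₀) (y : ℝ) :
    taylorWithinEval g 1 s x₀ y = g x₀ + deriv g x₀ * (y - x₀) := by
  rw [taylorWithinEval_succ, taylor_within_zero_eval, iteratedDerivWithin_one, hg.derivWithin hs]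
  simp [mul_comm]

lemma abs_sub_sub_deriv_mul_le_of_abs_deriv_deriv_le {g : ℝ → ℝ} {K : ℝ}
    (hg : ContDiff ℝ 2 g) (hK : ∀ t, |deriv (deriv g) t| ≤ K) (x y : ℝ) :
    |g y - g x - deriv g x * (y - x)| ≤ K / 2 * (y - x) ^ 2 := by
  rcases eq_or_ne x y with rfl | hxy
  · simp
  obtain ⟨t, -, ht⟩ := taylor_mean_remainder_lagrange_iteratedDeriv (n := 1) hxy hg.contDiffOn
  rw [taylorWithinEval_one_of_differentiableAt (hg.differentiable two_ne_zero x)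
    (uniqueDiffOn_uIcc hxy x Set.left_mem_uIcc), iteratedDeriv_succ, iteratedDeriv_one] at ht
  rw [sub_sub, ht, abs_div, abs_mul, abs_sq]
  simp only [Nat.reduceAdd, Nat.factorial_two, Nat.cast_ofNat, abs_two]
  rw [mul_div_right_comm]
  gcongr
  exact hK t

lemma p1_add_p2_eq_zero_of_diag {f : ℝ × ℝ → ℝ} {x : ℝ}
    (hf : DifferentiableAt ℝ f (x, x)) (hdiag : ∀ t, f (t, t) = 0) : p1 f x x + p2 f x x = 0 := by
  have hL := hf.hasFDerivAt
  have h₁ : p1 f x x = fderiv ℝ f (x, x) (1, 0) :=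
    (hL.comp_hasDerivAt_of_eq x ((hasDerivAt_id x).prodMk (hasDerivAt_const x x)) rfl).deriv
  have h₂ : p2 f x x = fderiv ℝ f (x, x) (0, 1) :=
    (hL.comp_hasDerivAt_of_eq x ((hasDerivAt_const x x).prodMk (hasDerivAt_id x)) rfl).deriv
  have h₃ : fderiv ℝ f (x, x) (1, 1) = 0 := by
    have hzero : (f ∘ fun t => (t, t)) = fun _ => 0 := funext hdiag
    have := (hL.comp_hasDerivAt_of_eq x ((hasDerivAt_id' x).prodMk (hasDerivAt_id' x)) rfl).deriv
    rwa [hzero, deriv_const, eq_comm] at this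
  rw [h₁, h₂, ← map_add]
  simpa using h₃

lemma mul_sq_div_four_lt_mul_of_abs_sub_mul_le {a A K C d : ℝ} (hA : C / 2 < A) (hd : d ≠ 0)
    (hKd : K * |d| < C / 2) (ha : |a - A * d| ≤ K / 2 * d ^ 2) : C * d ^ 2 / 4 < d * a := by
  have hd2 : 0 < d ^ 2 := by positivity
  have hlin : A * d ^ 2 - |d| * (K / 2 * d ^ 2) ≤ d * a := by
    have := mul_le_mul_of_nonneg_left ha (abs_nonneg d)
    rw [← abs_mul] at this
    nlinarith [neg_abs_le (d * (a - A * d))]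
  nlinarith

/-- Near a point x₀ where the selection gradient exceeds C/2 and the second
derivatives of the fitness are bounded by C′, nearby mutants of the right sign invade
while inducing negative reverse fitness: `(y−x₀)f(y;x₀) > 0` and
`f(y;x₀)·f(x₀;y) < 0`, with the quantitative lower bounds when y > x₀. -/
theorem invasion_implies_fixation_near_nonsingular
    (f : ℝ × ℝ → ℝ) (hf : ContDiff ℝ 2 f) (hdiag : ∀ x : ℝ, f (x, x) = 0)
    (x₀ C C' : ℝ) (hC : 0 < C) (hC' : 0 < C')
    (hgrad : C / 2 < p1 f x₀ x₀)
    (hbdd : ∀ u v : ℝ, |p11 f u v| ≤ C' ∧ |p12 f u v| ≤ C' ∧ |p22 f u v| ≤ C') :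
    ∀ y : ℝ, y ≠ x₀ → |y - x₀| < C / (2 * C') →
      0 < (y - x₀) * f (y, x₀) ∧
      f (y, x₀) * f (x₀, y) < 0 ∧
      (x₀ < y → C * (y - x₀) / 4 < f (y, x₀) ∧ f (x₀, y) < C * (x₀ - y) / 4) := by
  intro y hy hnear
  have hd : y - x₀ ≠ 0 := sub_ne_zero.2 hy
  have hKd : C' * |y - x₀| < C / 2 := by
    rw [lt_div_iff₀ (by positivity)] at hnear
    linarith
  have hsum : p1 f x₀ x₀ + p2 f x₀ x₀ = 0 :=
    p1_add_p2_eq_zero_of_diag (hf.differentiable two_ne_zero _) hdiag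
  have hinvade : C * (y - x₀) ^ 2 / 4 < (y - x₀) * f (y, x₀) := by
    refine mul_sq_div_four_lt_mul_of_abs_sub_mul_le hgrad hd hKd ?_
    calc |f (y, x₀) - p1 f x₀ x₀ * (y - x₀)|
        = |f (y, x₀) - f (x₀, x₀) - p1 f x₀ x₀ * (y - x₀)| := by rw [hdiag, sub_zero]
      _ ≤ C' / 2 * (y - x₀) ^ 2 :=
        abs_sub_sub_deriv_mul_le_of_abs_deriv_deriv_le (g := fun u => f (u, x₀))
          (hf.comp (contDiff_id.prodMk contDiff_const)) (fun t => (hbdd t x₀).1) x₀ y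
  have hresist : C * (y - x₀) ^ 2 / 4 < (y - x₀) * -f (x₀, y) := by
    refine mul_sq_div_four_lt_mul_of_abs_sub_mul_le hgrad hd hKd ?_
    calc |-f (x₀, y) - p1 f x₀ x₀ * (y - x₀)|
        = |f (x₀, y) - f (x₀, x₀) - p2 f x₀ x₀ * (y - x₀)| := by
          rw [hdiag, ← abs_neg, eq_neg_of_add_eq_zero_right hsum]
          ring_nf
      _ ≤ C' / 2 * (y - x₀) ^ 2 :=
        abs_sub_sub_deriv_mul_le_of_abs_deriv_deriv_le (g := fun v => f (x₀, v))
          (hf.comp (contDiff_const.prodMk contDiff_id)) (fun t => (hbdd x₀ t).2.2) x₀ y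
  have hsq : 0 < C * (y - x₀) ^ 2 / 4 := by positivity
  have hinvade₀ := hsq.trans hinvade
  have hresist₀ := hsq.trans hresist
  refine ⟨hinvade₀, by nlinarith [mul_pos hinvade₀ hresist₀], fun hlt => ⟨?_, ?_⟩⟩
  · nlinarith
  · nlinarith
end

section
/- Let f : ℝ² → ℝ be C² with f(x;x) = 0 for all x and with an evolutionary singularity at x*; set a = ∂₁₁f(x*;x*), c = ∂₂₂f(x*;x*). If a + c > 0, then every neighborhood of x* contains points x ≠ y with f(x;y) > 0 and f(y;x) > 0 (coexistence). If a + c < 0, then there is a neighborhood U of x* such that no two distinct points x, y ∈ U satisfy both f(x;y) > 0 and f(y;x) > 0. -/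
/-!
Write `v = (1, -1)` and `D²f` for the second Fréchet derivative. Along the antidiagonal lines
`s ↦ (m + s, m - s)` the second derivative of `f` is `D²f(v, v)`. Since `f` vanishes on the
diagonal, `D²f(w, w) = 0` for `w = (1, 1)` at diagonal points, so the parallelogram law gives
`D²f(x*, x*)(v, v) = 2 (a + c)`, and by continuity this sign persists on a ball around `(x*, x*)`.

If `a + c > 0`, then `s ↦ f(x* + s, x* - s)` is strictly convex near `0`, vanishes at `0`, and has
a critical point there because `∂₁f = ∂₂f = 0` at the singularity; hence it is positive at `±t`.
If `a + c < 0`, then for `x ≠ y` near `x*` the function `s ↦ f(m + s, m - s)` with `m = (x + y)/2`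
is strictly concave and vanishes at `0`, so midpoint concavity gives `f(x, y) + f(y, x) < 0`.
-/

open Set Metric

theorem StrictConvexOn.lt_of_hasDerivAt_eq_zero {S : Set ℝ} {g : ℝ → ℝ} {x y : ℝ}
    (hg : StrictConvexOn ℝ S g) (hx : x ∈ S) (hy : y ∈ S) (hxy : x ≠ y)
    (hg' : HasDerivAt g 0 x) : g x < g y := by
  rcases hxy.lt_or_gt with hlt | hgt
  · have := hg.lt_slope_of_hasDerivAt hx hy hlt hg'
    rw [slope_def_field, lt_div_iff₀ (sub_pos.2 hlt)] at this
    linarith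
  · have := hg.slope_lt_of_hasDerivAt hy hx hgt hg'
    rw [slope_def_field, div_lt_iff₀ (sub_pos.2 hgt)] at this
    linarith

theorem Convex.setOf_add_smul_mem {E : Type*} [AddCommGroup E] [Module ℝ E] {U : Set E}
    (hU : Convex ℝ U) (p v : E) : Convex ℝ {s : ℝ | p + s • v ∈ U} := by
  have hline : {s : ℝ | p + s • v ∈ U} = AffineMap.lineMap p (p + v) ⁻¹' U := by
    ext s
    simp [AffineMap.lineMap_apply, add_comm]
  exact hline ▸ hU.affine_preimage _

section AlongLine

variable {E F : Type*} [NormedAddCommGroup E] [NormedSpace ℝ E]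
  [NormedAddCommGroup F] [NormedSpace ℝ F] {p v : E}

theorem hasDerivAt_comp_add_smul {g : E → F} {t : ℝ} (hg : DifferentiableAt ℝ g (p + t • v)) :
    HasDerivAt (fun s : ℝ => g (p + s • v)) (fderiv ℝ g (p + t • v) v) t := by
  have hline : HasDerivAt (fun s : ℝ => p + s • v) v t := by
    simpa using ((hasDerivAt_id t).smul_const v).const_add p
  exact hg.hasFDerivAt.comp_hasDerivAt t hline

theorem iterate_deriv_two_comp_add_smul {f : E → F} (hf : ContDiff ℝ 2 f) (t : ℝ) :
    deriv^[2] (fun s : ℝ => f (p + s • v)) t = fderiv ℝ (fderiv ℝ f) (p + t • v) v v := by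
  have hf' : ContDiff ℝ 1 (fderiv ℝ f) := hf.fderiv_right (by norm_num)
  have hderiv : deriv (fun s : ℝ => f (p + s • v)) = fun s => fderiv ℝ f (p + s • v) v :=
    funext fun s => (hasDerivAt_comp_add_smul (hf.differentiable two_ne_zero _)).deriv
  have h2 := (hasDerivAt_comp_add_smul (p := p) (v := v) (t := t)
    (hf'.differentiable one_ne_zero _)).clm_apply (hasDerivAt_const t v)
  simp only [Function.iterate_succ, Function.iterate_zero, Function.comp_apply, hderiv]
  simpa using h2.deriv

theorem strictConvexOn_comp_add_smul {f : E → ℝ} (hf : ContDiff ℝ 2 f) {U : Set E}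
    (hU : Convex ℝ U) (hpos : ∀ q ∈ U, 0 < fderiv ℝ (fderiv ℝ f) q v v) :
    StrictConvexOn ℝ {s : ℝ | p + s • v ∈ U} (fun s => f (p + s • v)) :=
  strictConvexOn_of_deriv2_pos' (hU.setOf_add_smul_mem p v)
    (hf.continuous.comp (by fun_prop)).continuousOn
    fun s hs => (iterate_deriv_two_comp_add_smul hf s).symm ▸ hpos _ hs

theorem strictConcaveOn_comp_add_smul {f : E → ℝ} (hf : ContDiff ℝ 2 f) {U : Set E}
    (hU : Convex ℝ U) (hneg : ∀ q ∈ U, fderiv ℝ (fderiv ℝ f) q v v < 0) :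
    StrictConcaveOn ℝ {s : ℝ | p + s • v ∈ U} (fun s => f (p + s • v)) :=
  strictConcaveOn_of_deriv2_neg' (hU.setOf_add_smul_mem p v)
    (hf.continuous.comp (by fun_prop)).continuousOn
    fun s hs => (iterate_deriv_two_comp_add_smul hf s).symm ▸ hneg _ hs

end AlongLine

theorem ContinuousLinearMap.apply_sub_sub_add_apply_add_add {E F : Type*}
    [NormedAddCommGroup E] [NormedSpace ℝ E] [NormedAddCommGroup F] [NormedSpace ℝ F]
    (B : E →L[ℝ] E →L[ℝ] F) (x y : E) :
    B (x - y) (x - y) + B (x + y) (x + y) = (2 : ℝ) • (B x x + B y y) := by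
  simp only [map_sub, map_add, sub_apply, add_apply]
  module

noncomputable def antidiagDeriv2 (f : ℝ × ℝ → ℝ) (q : ℝ × ℝ) : ℝ :=
  fderiv ℝ (fderiv ℝ f) q (1, -1) (1, -1)

section PlaneFunction

variable {f : ℝ × ℝ → ℝ}

theorem p1_eq_fderiv (hf : Differentiable ℝ f) (a b : ℝ) :
    p1 f a b = fderiv ℝ f (a, b) (1, 0) := by
  simpa [p1] using (hasDerivAt_comp_add_smul (p := ((0 : ℝ), b)) (v := ((1 : ℝ), (0 : ℝ)))
    (t := a) (hf _)).deriv

theorem p2_eq_fderiv (hf : Differentiable ℝ f) (a b : ℝ) :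
    p2 f a b = fderiv ℝ f (a, b) (0, 1) := by
  simpa [p2] using (hasDerivAt_comp_add_smul (p := (a, (0 : ℝ))) (v := ((0 : ℝ), (1 : ℝ)))
    (t := b) (hf _)).deriv

theorem p11_eq_fderiv_fderiv (hf : ContDiff ℝ 2 f) (a b : ℝ) :
    p11 f a b = fderiv ℝ (fderiv ℝ f) (a, b) (1, 0) (1, 0) := by
  simpa [p11, p1] using
    iterate_deriv_two_comp_add_smul hf (p := ((0 : ℝ), b)) (v := ((1 : ℝ), (0 : ℝ))) a

theorem p22_eq_fderiv_fderiv (hf : ContDiff ℝ 2 f) (a b : ℝ) :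
    p22 f a b = fderiv ℝ (fderiv ℝ f) (a, b) (0, 1) (0, 1) := by
  simpa [p22, p2] using
    iterate_deriv_two_comp_add_smul hf (p := (a, (0 : ℝ))) (v := ((0 : ℝ), (1 : ℝ))) b

theorem fderiv_fderiv_apply_one_one_eq_zero (hf : ContDiff ℝ 2 f) (hdiag : ∀ x, f (x, x) = 0)
    (u : ℝ) : fderiv ℝ (fderiv ℝ f) (u, u) (1, 1) (1, 1) = 0 := by
  have hzero : (fun s : ℝ => f ((u, u) + s • ((1 : ℝ), (1 : ℝ)))) = fun _ => 0 :=
    funext fun s => by simpa using hdiag (u + s)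
  have h := iterate_deriv_two_comp_add_smul hf (p := (u, u)) (v := ((1 : ℝ), (1 : ℝ))) 0
  rw [hzero] at h
  simpa using h.symm

theorem continuous_antidiagDeriv2 (hf : ContDiff ℝ 2 f) : Continuous (antidiagDeriv2 f) :=
  (((hf.fderiv_right (by norm_num)).continuous_fderiv one_ne_zero).clm_apply
    continuous_const).clm_apply continuous_const

theorem antidiagDeriv2_diag (hf : ContDiff ℝ 2 f) (hdiag : ∀ x, f (x, x) = 0) (u : ℝ) :
    antidiagDeriv2 f (u, u) = 2 * (p11 f u u + p22 f u u) := by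
  have h := (fderiv ℝ (fderiv ℝ f) (u, u)).apply_sub_sub_add_apply_add_add (1, 0) (0, 1)
  simp only [Prod.mk_sub_mk, Prod.mk_add_mk, sub_zero, zero_sub, add_zero, zero_add,
    fderiv_fderiv_apply_one_one_eq_zero hf hdiag, smul_eq_mul] at h
  rw [antidiagDeriv2, h, p11_eq_fderiv_fderiv hf, p22_eq_fderiv_fderiv hf]

theorem antidiag_add_smul (m s : ℝ) :
    ((m, m) : ℝ × ℝ) + s • ((1 : ℝ), (-1 : ℝ)) = (m + s, m - s) := by
  ext <;> simp [sub_eq_add_neg]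

theorem apply_add_sub_pos_of_antidiagDeriv2_pos (hf : ContDiff ℝ 2 f) (hdiag : ∀ x, f (x, x) = 0)
    {xs : ℝ} (hsing1 : p1 f xs xs = 0) (hsing2 : p2 f xs xs = 0) {U : Set (ℝ × ℝ)}
    (hU : Convex ℝ U) (hxs : (xs, xs) ∈ U)
    (hpos : ∀ q ∈ U, 0 < antidiagDeriv2 f q)
    {t : ℝ} (ht : t ≠ 0) (htU : (xs + t, xs - t) ∈ U) : 0 < f (xs + t, xs - t) := by
  have hconv := strictConvexOn_comp_add_smul (p := (xs, xs)) hf hU hpos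
  have hslope : fderiv ℝ f (xs, xs) (1, -1) = 0 := by
    rw [show ((1 : ℝ), (-1 : ℝ)) = (1, 0) - (0, 1) by simp, map_sub,
      ← p1_eq_fderiv (hf.differentiable two_ne_zero),
      ← p2_eq_fderiv (hf.differentiable two_ne_zero), hsing1, hsing2, sub_zero]
  have hcrit : HasDerivAt (fun s : ℝ => f ((xs, xs) + s • ((1 : ℝ), (-1 : ℝ)))) 0 0 := by
    simpa [hslope] using hasDerivAt_comp_add_smul (p := (xs, xs)) (v := ((1 : ℝ), (-1 : ℝ)))
      (t := 0) (hf.differentiable two_ne_zero _)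
  have := hconv.lt_of_hasDerivAt_eq_zero (x := 0) (y := t) (by simpa using hxs)
    (by rw [mem_ofPred_eq, antidiag_add_smul]; exact htU) ht.symm hcrit
  simpa only [antidiag_add_smul, add_zero, sub_zero, hdiag] using this

theorem apply_add_apply_swap_neg_of_antidiagDeriv2_neg (hf : ContDiff ℝ 2 f)
    (hdiag : ∀ x, f (x, x) = 0) {U : Set (ℝ × ℝ)} (hU : Convex ℝ U)
    (hneg : ∀ q ∈ U, antidiagDeriv2 f q < 0)
    {x y : ℝ} (hxy : x ≠ y) (hxyU : (x, y) ∈ U) (hyxU : (y, x) ∈ U) : f (x, y) + f (y, x) < 0 := by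
  set m := (x + y) / 2
  set t := (x - y) / 2
  have hconc := strictConcaveOn_comp_add_smul (p := (m, m)) hf hU hneg
  have hplus : ((m, m) : ℝ × ℝ) + t • ((1 : ℝ), (-1 : ℝ)) = (x, y) := by
    rw [antidiag_add_smul]; ext <;> simp only [m, t] <;> ring
  have hminus : ((m, m) : ℝ × ℝ) + (-t) • ((1 : ℝ), (-1 : ℝ)) = (y, x) := by
    rw [antidiag_add_smul]; ext <;> simp only [m, t] <;> ring
  have ht : t ∈ {s : ℝ | ((m, m) : ℝ × ℝ) + s • ((1 : ℝ), (-1 : ℝ)) ∈ U} := by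
    rw [mem_ofPred_eq, hplus]; exact hxyU
  have hmt : -t ∈ {s : ℝ | ((m, m) : ℝ × ℝ) + s • ((1 : ℝ), (-1 : ℝ)) ∈ U} := by
    rw [mem_ofPred_eq, hminus]; exact hyxU
  have hne : t ≠ -t := by simp only [t]; intro h; apply hxy; linarith
  have hmid := hconc.2 ht hmt hne (by norm_num : (0 : ℝ) < 1 / 2) (by norm_num : (0 : ℝ) < 1 / 2)
    (by norm_num)
  have hzero : (1 / 2 : ℝ) * t + 1 / 2 * -t = 0 := by ring
  simp only [hzero, zero_smul, add_zero, hdiag, hplus, hminus, smul_eq_mul] at hmid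
  linarith

end PlaneFunction

theorem prodMk_mem_ball_iff {x y z δ : ℝ} : (x, y) ∈ ball (z, z) δ ↔ |x - z| < δ ∧ |y - z| < δ := by
  rw [← ball_prod_same, mem_prod, mem_ball, mem_ball, Real.dist_eq, Real.dist_eq]

/-- Coexistence criterion near an evolutionary singularity x*: with
a = ∂₁₁f(x*;x*) and c = ∂₂₂f(x*;x*), if a + c > 0 then every neighborhood of x*
contains two distinct coexisting traits (f(x;y) > 0 and f(y;x) > 0), while if
a + c < 0 no two distinct traits near x* coexist.  Here `f (x, y)` is f(x;y). -/
theorem coexistence_criterion_near_singularity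
    (f : ℝ × ℝ → ℝ) (hf : ContDiff ℝ 2 f) (hdiag : ∀ x : ℝ, f (x, x) = 0)
    (xs : ℝ) (hsing1 : p1 f xs xs = 0) (hsing2 : p2 f xs xs = 0) :
    (0 < p11 f xs xs + p22 f xs xs →
      ∀ ε : ℝ, 0 < ε → ∃ x y : ℝ, x ≠ y ∧ |x - xs| < ε ∧ |y - xs| < ε ∧
        0 < f (x, y) ∧ 0 < f (y, x)) ∧
    (p11 f xs xs + p22 f xs xs < 0 →
      ∃ ε : ℝ, 0 < ε ∧ ∀ x y : ℝ, |x - xs| < ε → |y - xs| < ε → x ≠ y →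
        ¬(0 < f (x, y) ∧ 0 < f (y, x))) := by
  have hQ := (continuous_antidiagDeriv2 hf).continuousAt (x := (xs, xs))
  have hQxs := antidiagDeriv2_diag hf hdiag xs
  refine ⟨fun hpos ε hε => ?_, fun hneg => ?_⟩
  · obtain ⟨δ, hδ, hball⟩ :=
      eventually_nhds_iff_ball.1 (hQ.eventually_const_lt (by linarith : 0 < antidiagDeriv2 f _))
    obtain ⟨t, ht, htε, htδ⟩ : ∃ t, 0 < t ∧ t < ε ∧ t < δ :=
      ⟨min ε δ / 2, by positivity, by linarith [min_le_left ε δ], by linarith [min_le_right ε δ]⟩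
    have hcoex (s : ℝ) (hs : |s| = t) : 0 < f (xs + s, xs - s) :=
      apply_add_sub_pos_of_antidiagDeriv2_pos hf hdiag hsing1 hsing2 (convex_ball _ _)
        (mem_ball_self hδ) hball (by rintro rfl; simp [← hs] at ht)
        (prodMk_mem_ball_iff.2 ⟨by simpa [hs], by simpa [abs_neg, hs]⟩)
    refine ⟨xs + t, xs - t, by linarith, by simpa [abs_of_pos ht], by simpa [abs_of_pos ht],
      hcoex t (abs_of_pos ht), ?_⟩
    simpa [sub_eq_add_neg, add_comm] using hcoex (-t) (by rw [abs_neg, abs_of_pos ht])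
  · obtain ⟨δ, hδ, hball⟩ :=
      eventually_nhds_iff_ball.1 (hQ.eventually_lt_const (by linarith : antidiagDeriv2 f _ < 0))
    refine ⟨δ, hδ, fun x y hx hy hxy ⟨hxy_pos, hyx_pos⟩ => ?_⟩
    have := apply_add_apply_swap_neg_of_antidiagDeriv2_neg hf hdiag (convex_ball _ _) hball hxy
      (prodMk_mem_ball_iff.2 ⟨hx, hy⟩) (prodMk_mem_ball_iff.2 ⟨hy, hx⟩)
    linarith
end

section
/- Let λ, μ : ℝ → ℝ be C³ and α : ℝ² → ℝ be C⁴ with α(x,x) > 0, set r = λ − μ with r(x*) > 0, n̄(x) = r(x)/α(x,x), and f(y;x) = r(y) − α(y,x)n̄(x). Suppose x* is an evolutionary singularity, i.e. r′(x*) = r(x*)∂₁α(x*,x*)/α(x*,x*). Then with a = ∂₁₁f(x*;x*) and c = ∂₂₂f(x*;x*), one has α(x*,x*)²(a + c) = 2 r(x*)(α(x*,x*)∂₁₂α(x*,x*) − ∂₁α(x*,x*)∂₂α(x*,x*)). -/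
/-!
Write r = λ − μ = n̄ · g with g(x) = α(x,x). Differentiating twice by Leibniz's rule and using
g'' = ∂₁₁α + 2∂₁₂α + ∂₂₂α (symmetry of second derivatives), the terms in ∂₁₁α, ∂₂₂α and n̄''
cancel and a + c = 2(n̄'∂₁α + n̄∂₁₂α). At a singularity, r' = n̄'g + n̄(∂₁α + ∂₂α) = r∂₁α/g
forces n̄'g = −n̄∂₂α, which turns this into the stated formula.
-/

noncomputable def q1 (α : ℝ → ℝ → ℝ) (a b : ℝ) : ℝ := deriv (fun u => α u b) a
noncomputable def q2 (α : ℝ → ℝ → ℝ) (a b : ℝ) : ℝ := deriv (fun v => α a v) b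
noncomputable def q12 (α : ℝ → ℝ → ℝ) (a b : ℝ) : ℝ := deriv (fun v => q1 α a v) b

/-- Invasion fitness f(y;x) = r(y) − α(y,x) r(x)/α(x,x), with r = λ − μ. -/
noncomputable def fit (lam mu : ℝ → ℝ) (α : ℝ → ℝ → ℝ) (y x : ℝ) : ℝ :=
  (lam y - mu y) - α y x * ((lam x - mu x) / α x x)

open Function

section Slices

variable {E : Type*} [NormedAddCommGroup E] [NormedSpace ℝ E] {F : ℝ × ℝ → E} {a b : ℝ}

theorem DifferentiableAt.hasDerivAt_fst_slice (h : DifferentiableAt ℝ F (a, b)) :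
    HasDerivAt (fun u => F (u, b)) (fderiv ℝ F (a, b) (1, 0)) a :=
  h.hasFDerivAt.comp_hasDerivAt (f := fun u => (u, b)) a
    ((hasDerivAt_id a).prodMk (hasDerivAt_const a b))

theorem DifferentiableAt.hasDerivAt_snd_slice (h : DifferentiableAt ℝ F (a, b)) :
    HasDerivAt (fun v => F (a, v)) (fderiv ℝ F (a, b) (0, 1)) b :=
  h.hasFDerivAt.comp_hasDerivAt (f := fun v => (a, v)) b
    ((hasDerivAt_const b a).prodMk (hasDerivAt_id b))

theorem DifferentiableAt.hasDerivAt_diag_slice (h : DifferentiableAt ℝ F (a, a)) :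
    HasDerivAt (fun t => F (t, t)) (fderiv ℝ F (a, a) (1, 0) + fderiv ℝ F (a, a) (0, 1)) a := by
  rw [← map_add, Prod.mk_add_mk, add_zero, zero_add]
  exact h.hasFDerivAt.comp_hasDerivAt (f := fun t => (t, t)) a
    ((hasDerivAt_id a).prodMk (hasDerivAt_id a))

end Slices

section Partials

variable {α : ℝ → ℝ → ℝ}

theorem q1_eq_fderiv {a b : ℝ} (h : DifferentiableAt ℝ (uncurry α) (a, b)) :
    q1 α a b = fderiv ℝ (uncurry α) (a, b) (1, 0) :=
  h.hasDerivAt_fst_slice.deriv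

theorem q2_eq_fderiv {a b : ℝ} (h : DifferentiableAt ℝ (uncurry α) (a, b)) :
    q2 α a b = fderiv ℝ (uncurry α) (a, b) (0, 1) :=
  h.hasDerivAt_snd_slice.deriv

theorem hasDerivAt_diag {x : ℝ} (h : DifferentiableAt ℝ (uncurry α) (x, x)) :
    HasDerivAt (fun t => α t t) (q1 α x x + q2 α x x) x := by
  rw [q1_eq_fderiv h, q2_eq_fderiv h]
  exact h.hasDerivAt_diag_slice

theorem contDiff_uncurry_q1 {n : ℕ} (h : ContDiff ℝ (n + 1) (uncurry α)) :
    ContDiff ℝ n (uncurry (q1 α)) := by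
  have hd := h.differentiable (by simp)
  rw [show uncurry (q1 α) = fun p => fderiv ℝ (uncurry α) p (1, 0) from
    funext fun p => q1_eq_fderiv (hd p)]
  exact (h.fderiv_right le_rfl).clm_apply contDiff_const

theorem contDiff_uncurry_q2 {n : ℕ} (h : ContDiff ℝ (n + 1) (uncurry α)) :
    ContDiff ℝ n (uncurry (q2 α)) := by
  have hd := h.differentiable (by simp)
  rw [show uncurry (q2 α) = fun p => fderiv ℝ (uncurry α) p (0, 1) from
    funext fun p => q2_eq_fderiv (hd p)]
  exact (h.fderiv_right le_rfl).clm_apply contDiff_const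

theorem q12_eq_q1_q2 (h : ContDiff ℝ 2 (uncurry α)) (a b : ℝ) :
    q12 α a b = q1 (q2 α) a b := by
  have hd := h.differentiable (by simp)
  have hd2 : Differentiable ℝ (fderiv ℝ (uncurry α)) :=
    (h.fderiv_right (m := 1) le_rfl).differentiable (by simp)
  have h12 : q12 α a b = fderiv ℝ (fderiv ℝ (uncurry α)) (a, b) (0, 1) (1, 0) := by
    rw [q12, funext fun v => q1_eq_fderiv (hd (a, v))]
    exact ((hd2 (a, b)).hasDerivAt_snd_slice.clm_apply (hasDerivAt_const b _)).deriv.trans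
      (by simp)
  have h21 : q1 (q2 α) a b = fderiv ℝ (fderiv ℝ (uncurry α)) (a, b) (1, 0) (0, 1) := by
    rw [q1, funext fun u => q2_eq_fderiv (hd (u, b))]
    exact ((hd2 (a, b)).hasDerivAt_fst_slice.clm_apply (hasDerivAt_const a _)).deriv.trans
      (by simp)
  rw [h12, h21]
  exact (h.contDiffAt.isSymmSndFDerivAt (by simp)).eq _ _

theorem hasDerivAt_q1 {a b : ℝ} (h : DifferentiableAt ℝ (uncurry α) (a, b)) :
    HasDerivAt (fun u => α u b) (q1 α a b) a :=
  h.hasDerivAt_fst_slice.differentiableAt.hasDerivAt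

theorem contDiff_diag {n : ℕ} (h : ContDiff ℝ n (uncurry α)) : ContDiff ℝ n (fun t => α t t) :=
  h.comp (contDiff_id.prodMk contDiff_id)

theorem contDiff_snd_slice {n : ℕ} (h : ContDiff ℝ n (uncurry α)) (a : ℝ) :
    ContDiff ℝ n (fun v => α a v) :=
  h.comp (contDiff_const.prodMk contDiff_id)

theorem deriv_deriv_diag (h : ContDiff ℝ 2 (uncurry α)) (x : ℝ) :
    deriv (deriv fun t => α t t) x = q1 (q1 α) x x + 2 * q12 α x x + q2 (q2 α) x x := by
  have hd := h.differentiable (by simp)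
  have hd1 := (contDiff_uncurry_q1 (n := 1) h).differentiable (by simp)
  have hd2 := (contDiff_uncurry_q2 (n := 1) h).differentiable (by simp)
  rw [funext fun t => (hasDerivAt_diag (hd (t, t))).deriv]
  refine ((hasDerivAt_diag (hd1 (x, x))).add (hasDerivAt_diag (hd2 (x, x)))).deriv.trans ?_
  rw [← q12_eq_q1_q2 h, show q2 (q1 α) x x = q12 α x x from rfl]
  ring

end Partials

theorem deriv_deriv_mul {f g : ℝ → ℝ} (hf : ContDiff ℝ 2 f) (hg : ContDiff ℝ 2 g) (x : ℝ) :
    deriv (deriv fun t => f t * g t) x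
      = deriv (deriv f) x * g x + 2 * (deriv f x * deriv g x) + f x * deriv (deriv g) x := by
  have h := iteratedDeriv_mul (x := x) hf.contDiffAt hg.contDiffAt
  simp only [iteratedDeriv_succ, iteratedDeriv_zero] at h
  rw [show (fun t => f t * g t) = f * g from rfl, h]
  simp [Finset.sum_range_succ, iteratedDeriv_succ]
  ring

section Fitness

variable {lam mu : ℝ → ℝ} {α : ℝ → ℝ → ℝ}

noncomputable def nbar (lam mu : ℝ → ℝ) (α : ℝ → ℝ → ℝ) (x : ℝ) : ℝ := (lam x - mu x) / α x x

theorem contDiff_nbar (hr : ContDiff ℝ 2 fun x => lam x - mu x) (hα : ContDiff ℝ 2 (uncurry α))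
    (hα0 : ∀ x, α x x ≠ 0) : ContDiff ℝ 2 (nbar lam mu α) :=
  hr.div (contDiff_diag hα) hα0

theorem nbar_mul_diag (hα0 : ∀ x, α x x ≠ 0) :
    (fun x => nbar lam mu α x * α x x) = fun x => lam x - mu x :=
  funext fun x => div_mul_cancel₀ _ (hα0 x)

theorem deriv_lam_sub_mu (hr : ContDiff ℝ 2 fun x => lam x - mu x)
    (hα : ContDiff ℝ 2 (uncurry α)) (hα0 : ∀ x, α x x ≠ 0) (x : ℝ) :
    deriv (fun x => lam x - mu x) x
      = deriv (nbar lam mu α) x * α x x + nbar lam mu α x * (q1 α x x + q2 α x x) := by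
  rw [← nbar_mul_diag hα0]
  exact (((contDiff_nbar hr hα hα0).differentiable (by simp) x).hasDerivAt.mul
    (hasDerivAt_diag (hα.differentiable (by simp) (x, x)))).deriv

theorem deriv_deriv_lam_sub_mu (hr : ContDiff ℝ 2 fun x => lam x - mu x)
    (hα : ContDiff ℝ 2 (uncurry α)) (hα0 : ∀ x, α x x ≠ 0) (x : ℝ) :
    deriv (deriv fun x => lam x - mu x) x
      = deriv (deriv (nbar lam mu α)) x * α x x
        + 2 * (deriv (nbar lam mu α) x * (q1 α x x + q2 α x x))
        + nbar lam mu α x * (q1 (q1 α) x x + 2 * q12 α x x + q2 (q2 α) x x) := by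
  rw [← nbar_mul_diag hα0, deriv_deriv_mul (contDiff_nbar hr hα hα0) (contDiff_diag hα),
    deriv_deriv_diag hα, (hasDerivAt_diag (hα.differentiable (by simp) (x, x))).deriv]

theorem deriv_deriv_fit_fst (hr : ContDiff ℝ 2 fun x => lam x - mu x)
    (hα : ContDiff ℝ 2 (uncurry α)) (y x : ℝ) :
    deriv (deriv fun y => fit lam mu α y x) y
      = deriv (deriv fun x => lam x - mu x) y - q1 (q1 α) y x * nbar lam mu α x := by
  have hr' : Differentiable ℝ (fun x => lam x - mu x) := hr.differentiable (by simp)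
  have hα' : Differentiable ℝ (uncurry α) := hα.differentiable (by simp)
  have hr'' : Differentiable ℝ (deriv fun x => lam x - mu x) :=
    (hr.deriv' (n := 1)).differentiable (by simp)
  have hq1 : Differentiable ℝ (uncurry (q1 α)) :=
    (contDiff_uncurry_q1 (n := 1) hα).differentiable (by simp)
  have hfit : deriv (fun y => fit lam mu α y x)
      = fun y => deriv (fun x => lam x - mu x) y - q1 α y x * nbar lam mu α x :=
    funext fun y => ((hr' y).hasDerivAt.sub ((hasDerivAt_q1 (hα' (y, x))).mul_const _)).deriv
  rw [hfit]
  exact ((hr'' y).hasDerivAt.sub ((hasDerivAt_q1 (hq1 (y, x))).mul_const _)).deriv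

theorem deriv_deriv_fit_snd (hr : ContDiff ℝ 2 fun x => lam x - mu x)
    (hα : ContDiff ℝ 2 (uncurry α)) (hα0 : ∀ x, α x x ≠ 0) (y x : ℝ) :
    deriv (deriv fun x => fit lam mu α y x) x
      = -(q2 (q2 α) y x * nbar lam mu α x + 2 * (q2 α y x * deriv (nbar lam mu α) x)
          + α y x * deriv (deriv (nbar lam mu α)) x) := by
  have hfit : deriv (fun x => fit lam mu α y x)
      = fun x => -deriv (fun x => α y x * nbar lam mu α x) x :=
    funext fun x => deriv_const_sub _
  rw [hfit, deriv.fun_neg, deriv_deriv_mul (contDiff_snd_slice hα y) (contDiff_nbar hr hα hα0)]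
  rfl

end Fitness

theorem a_plus_c_formula_general
    (lam mu : ℝ → ℝ) (α : ℝ → ℝ → ℝ)
    (hlam : ContDiff ℝ 3 lam) (hmu : ContDiff ℝ 3 mu)
    (hα : ContDiff ℝ 4 (fun p : ℝ × ℝ => α p.1 p.2))
    (hαpos : ∀ x : ℝ, 0 < α x x)
    (xs : ℝ)
    (hsing : deriv (fun u => lam u - mu u) xs
      = (lam xs - mu xs) * q1 α xs xs / α xs xs) :
    let a : ℝ := deriv (deriv (fun y => fit lam mu α y xs)) xs
    let c : ℝ := deriv (deriv (fun x => fit lam mu α xs x)) xs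
    (α xs xs) ^ 2 * (a + c)
      = 2 * (lam xs - mu xs) * (α xs xs * q12 α xs xs - q1 α xs xs * q2 α xs xs) := by
  intro a c
  have hr : ContDiff ℝ 2 fun x => lam x - mu x := (hlam.sub hmu).of_le (by norm_num)
  have hα2 : ContDiff ℝ 2 (uncurry α) := hα.of_le (by norm_num)
  have hα0 : ∀ x, α x x ≠ 0 := fun x => (hαpos x).ne'
  have ha : a = _ := deriv_deriv_fit_fst hr hα2 xs xs
  have hc : c = _ := deriv_deriv_fit_snd hr hα2 hα0 xs xs
  have hr1 := deriv_lam_sub_mu hr hα2 hα0 xs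
  have hr2 := deriv_deriv_lam_sub_mu hr hα2 hα0 xs
  have hn : nbar lam mu α xs * α xs xs = lam xs - mu xs := congrFun (nbar_mul_diag hα0) xs
  rw [eq_div_iff (hα0 xs)] at hsing
  linear_combination α xs xs ^ 2 * (ha + hc + hr2) - 2 * α xs xs * q1 α xs xs * hr1
    + 2 * q1 α xs xs * hsing
    + (2 * α xs xs * q12 α xs xs - 2 * q1 α xs xs * (q1 α xs xs + q2 α xs xs)) * hn

/-- At an evolutionary singularity x*, with a = ∂₁₁f(x*;x*) and c = ∂₂₂f(x*;x*),
the identity α(x*,x*)²(a+c) = 2r(x*)(α∂₁₂α − ∂₁α∂₂α)(x*,x*) holds. -/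
theorem a_plus_c_formula
    (lam mu : ℝ → ℝ) (α : ℝ → ℝ → ℝ)
    (hlam : ContDiff ℝ 3 lam) (hmu : ContDiff ℝ 3 mu)
    (hα : ContDiff ℝ 4 (fun p : ℝ × ℝ => α p.1 p.2))
    (hαpos : ∀ x : ℝ, 0 < α x x)
    (xs : ℝ) (hrpos : 0 < lam xs - mu xs)
    (hsing : deriv (fun u => lam u - mu u) xs
      = (lam xs - mu xs) * q1 α xs xs / α xs xs) :
    let a : ℝ := deriv (deriv (fun y => fit lam mu α y xs)) xs
    let c : ℝ := deriv (deriv (fun x => fit lam mu α xs x)) xs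
    (α xs xs) ^ 2 * (a + c)
      = 2 * (lam xs - mu xs) * (α xs xs * q12 α xs xs - q1 α xs xs * q2 α xs xs) :=
  a_plus_c_formula_general lam mu α hlam hmu hα hαpos xs hsing
end

section
/- For the model with μ ≡ 0, λ(x) = exp(−x²/(2σ_b²)), α(x,y) = exp(−(x−y)²/(2σ_α²)), the fitness f(y;x) = λ(y) − α(y,x)λ(x) has exactly one evolutionary singularity, x* = 0, and at x* = 0: ∂₁₁f(0;0) = 1/σ_α² − 1/σ_b² and ∂₂₂f(0;0) = 1/σ_α² + 1/σ_b². In particular ∂₁₁f(0;0) + ∂₂₂f(0;0) > 0 always, and ∂₁₁f(0;0) > 0 if and only if σ_α < σ_b. -/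
/-!
Every section of the fitness is a difference of Gaussian bumps `exp (-k * (y - a) ^ 2)`.
In `y ↦ f y x` the competition bump is centred at the resident `x`, so it is stationary
there and `∂₁f(x; x) = -x / σ_b² · λ(x)`, which vanishes only at `0`. At the origin both
sections have the shape `exp (-k₁ y²) - c · exp (-k₂ y²)`, whose second derivative at `0`
is `-2 k₁ + 2 c k₂`; for `x ↦ f 0 x` the two Gaussian factors merge into one with
`k₂ = 1 / (2σ_α²) + 1 / (2σ_b²)`.
-/

open Real

theorem deriv_deriv_eq_of_hasDerivAt {𝕜 E : Type*} [NontriviallyNormedField 𝕜]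
    [NormedAddCommGroup E] [NormedSpace 𝕜 E] {F F' : 𝕜 → E} {F'' : E} {a : 𝕜}
    (hF : ∀ x, HasDerivAt F (F' x) x) (hF' : HasDerivAt F' F'' a) :
    deriv (deriv F) a = F'' := by
  rw [funext fun x => (hF x).deriv]
  exact hF'.deriv

section GaussianBump

variable (k a : ℝ)

theorem hasDerivAt_exp_neg_mul_sub_sq (t : ℝ) :
    HasDerivAt (fun y => exp (-k * (y - a) ^ 2))
      (-2 * k * (t - a) * exp (-k * (t - a) ^ 2)) t := by
  have h : HasDerivAt (fun y => -k * (y - a) ^ 2) (-2 * k * (t - a)) t := by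
    refine ((((hasDerivAt_id t).sub_const a).pow 2).const_mul (-k)).congr_deriv ?_
    simp only [id_eq]
    ring
  convert h.exp using 1
  ring

theorem hasDerivAt_deriv_exp_neg_mul_sub_sq :
    HasDerivAt (fun t => -2 * k * (t - a) * exp (-k * (t - a) ^ 2)) (-2 * k) a := by
  refine ((((hasDerivAt_id a).sub_const a).const_mul (-2 * k)).mul
    (hasDerivAt_exp_neg_mul_sub_sq k a a)).congr_deriv ?_
  simp

theorem deriv_deriv_exp_sub_const_mul_exp (k₁ k₂ c : ℝ) :
    deriv (deriv fun y => exp (-k₁ * (y - a) ^ 2) - c * exp (-k₂ * (y - a) ^ 2)) a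
      = -2 * k₁ + 2 * c * k₂ := by
  refine deriv_deriv_eq_of_hasDerivAt
    (fun t => (hasDerivAt_exp_neg_mul_sub_sq k₁ a t).sub
      ((hasDerivAt_exp_neg_mul_sub_sq k₂ a t).const_mul c)) ?_
  refine ((hasDerivAt_deriv_exp_neg_mul_sub_sq k₁ a).sub
    ((hasDerivAt_deriv_exp_neg_mul_sub_sq k₂ a).const_mul c)).congr_deriv ?_
  ring

end GaussianBump

/-- In the Gaussian example (μ ≡ 0, λ(x) = exp(−x²/2σ_b²),
α(x,y) = exp(−(x−y)²/2σ_α²)), the fitness f(y;x) = λ(y) − α(y,x)λ(x) has x* = 0 as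
its unique evolutionary singularity, where ∂₁₁f(0;0) = 1/σ_α² − 1/σ_b² and
∂₂₂f(0;0) = 1/σ_α² + 1/σ_b²; their sum is always positive and ∂₁₁f(0;0) > 0 iff
σ_α < σ_b. -/
theorem gaussian_model_singularity (σb σα : ℝ) (hσb : 0 < σb) (hσα : 0 < σα) :
    let lam : ℝ → ℝ := fun x => Real.exp (-x ^ 2 / (2 * σb ^ 2))
    let α : ℝ → ℝ → ℝ := fun x y => Real.exp (-(x - y) ^ 2 / (2 * σα ^ 2))
    let f : ℝ → ℝ → ℝ := fun y x => lam y - α y x * lam x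
    (∀ xs : ℝ, deriv (fun y => f y xs) xs = 0 ↔ xs = 0) ∧
    deriv (deriv (fun y => f y 0)) 0 = 1 / σα ^ 2 - 1 / σb ^ 2 ∧
    deriv (deriv (fun x => f 0 x)) 0 = 1 / σα ^ 2 + 1 / σb ^ 2 ∧
    0 < deriv (deriv (fun y => f y 0)) 0 + deriv (deriv (fun x => f 0 x)) 0 ∧
    (0 < deriv (deriv (fun y => f y 0)) 0 ↔ σα < σb) := by
  intro lam α f
  set kb := (2 * σb ^ 2)⁻¹
  set ka := (2 * σα ^ 2)⁻¹
  have hmutant (xs : ℝ) : (fun y => f y xs)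
      = fun y => exp (-kb * (y - 0) ^ 2) - lam xs * exp (-ka * (y - xs) ^ 2) := by
    funext y; simp only [f, lam, α, kb, ka]; ring_nf
  have hresident : (fun x => f 0 x)
      = fun x => exp (-0 * (x - 0) ^ 2) - 1 * exp (-(ka + kb) * (x - 0) ^ 2) := by
    funext x; simp only [f, lam, α, kb, ka]; rw [← exp_add]; ring_nf
  have h11 : deriv (deriv (fun y => f y 0)) 0 = 1 / σα ^ 2 - 1 / σb ^ 2 := by
    rw [hmutant, deriv_deriv_exp_sub_const_mul_exp]
    norm_num [lam, kb, ka]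
    ring
  have h22 : deriv (deriv (fun x => f 0 x)) 0 = 1 / σα ^ 2 + 1 / σb ^ 2 := by
    rw [hresident, deriv_deriv_exp_sub_const_mul_exp]
    simp only [kb, ka]
    ring
  refine ⟨fun xs => ?_, h11, h22, ?_, ?_⟩
  · have h : HasDerivAt (fun y => exp (-kb * (y - 0) ^ 2) - lam xs * exp (-ka * (y - xs) ^ 2))
        (-2 * kb * xs * exp (-kb * xs ^ 2)) xs :=
      ((hasDerivAt_exp_neg_mul_sub_sq kb 0 xs).sub
        ((hasDerivAt_exp_neg_mul_sub_sq ka xs xs).const_mul (lam xs))).congr_deriv (by simp)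
    rw [hmutant, h.deriv]
    have : kb ≠ 0 := by positivity
    simp [this, exp_ne_zero]
  · rw [h11, h22]
    have : 0 < 1 / σα ^ 2 := by positivity
    linarith
  · rw [h11, sub_pos, one_div_lt_one_div (by positivity) (by positivity),
      pow_lt_pow_iff_left₀ hσα.le hσb.le two_ne_zero]
end

section
/- Let f : ℝ² → ℝ be C² with f(x;x)=0 on the diagonal, let x* be an evolutionary singularity with a = ∂₁₁f(x*;x*) < 0, and suppose ∂₁₁f(u;v) < 0 for all (u,v) in a neighborhood of (x*,x*). Then for all x < z < y in that neighborhood: if f(x;y) ≥ 0 then f(z;y) > 0, and if f(y;x) ≥ 0 then f(z;x) > 0 (a trait strictly between two mutually non-inferior traits has positive fitness against each). -/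
/-! For fixed `y`, `u ↦ f (u, y)` is strictly concave on the neighbourhood because `∂₁₁f < 0`
there. A strictly concave function is strictly above the smaller of its endpoint values inside
a segment, and one endpoint value is `f (y, y) = 0` while the other is `≥ 0` by assumption. -/

theorem StrictConcaveOn.pos_of_mem_Ioo {s : Set ℝ} {g : ℝ → ℝ} (hg : StrictConcaveOn ℝ s g)
    {x z y : ℝ} (hx : x ∈ s) (hy : y ∈ s) (hz : z ∈ Set.Ioo x y) (hgx : 0 ≤ g x)
    (hgy : 0 ≤ g y) : 0 < g z := by
  have hxy : x < y := hz.1.trans hz.2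
  refine (le_min hgx hgy).trans_lt (hg.lt_on_openSegment hx hy hxy.ne ?_)
  rwa [openSegment_eq_Ioo hxy]

theorem strictConcaveOn_slice_of_p11_neg {f : ℝ × ℝ → ℝ} (hf : Continuous f) {D : Set ℝ}
    (hD : Convex ℝ D) {b : ℝ} (hneg : ∀ u ∈ interior D, p11 f u b < 0) :
    StrictConcaveOn ℝ D (fun u => f (u, b)) :=
  strictConcaveOn_of_deriv2_neg hD (by fun_prop) hneg

theorem between_traits_positive_fitness_general
    (f : ℝ × ℝ → ℝ) (hf : ContDiff ℝ 2 f) (hdiag : ∀ x : ℝ, f (x, x) = 0)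
    (xs δ : ℝ)
    (hloc : ∀ u v : ℝ, |u - xs| < δ → |v - xs| < δ → p11 f u v < 0) :
    ∀ x z y : ℝ, |x - xs| < δ → |z - xs| < δ → |y - xs| < δ →
      x < z → z < y →
      (0 ≤ f (x, y) → 0 < f (z, y)) ∧ (0 ≤ f (y, x) → 0 < f (z, x)) := by
  intro x z y hx _ hy hxz hzy
  have hconc : ∀ b, |b - xs| < δ →
      StrictConcaveOn ℝ (Metric.ball xs δ) (fun u => f (u, b)) := fun b hb =>
    strictConcaveOn_slice_of_p11_neg hf.continuous (convex_ball xs δ) fun u hu =>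
      hloc u b (by rwa [Metric.isOpen_ball.interior_eq] at hu) hb
  have hzI : z ∈ Set.Ioo x y := ⟨hxz, hzy⟩
  exact ⟨fun hxy => (hconc y hy).pos_of_mem_Ioo hx hy hzI hxy (hdiag y).ge,
    fun hyx => (hconc x hx).pos_of_mem_Ioo hx hy hzI (hdiag x).ge hyx⟩

/-- Near an evolutionary singularity x* with a = ∂₁₁f(x*;x*) < 0 (and ∂₁₁f < 0 on a
δ-neighborhood), a trait z strictly between two mutually non-inferior traits x < z < y
has positive fitness against each of them.  Here `f (u, v)` denotes f(u;v). -/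
theorem between_traits_positive_fitness
    (f : ℝ × ℝ → ℝ) (hf : ContDiff ℝ 2 f) (hdiag : ∀ x : ℝ, f (x, x) = 0)
    (xs δ : ℝ) (hδ : 0 < δ)
    (hsing1 : p1 f xs xs = 0) (hsing2 : p2 f xs xs = 0)
    (ha : p11 f xs xs < 0)
    (hloc : ∀ u v : ℝ, |u - xs| < δ → |v - xs| < δ → p11 f u v < 0) :
    ∀ x z y : ℝ, |x - xs| < δ → |z - xs| < δ → |y - xs| < δ →
      x < z → z < y →
      (0 ≤ f (x, y) → 0 < f (z, y)) ∧ (0 ≤ f (y, x) → 0 < f (z, x)) :=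
  between_traits_positive_fitness_general f hf hdiag xs δ hloc
end
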